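/- If Δ(x1,...,x6) > 0 for x1,...,x6 ∈ [4,16], then ρ(x1,...,x6) > 0, where ρ(x1,...,x6) = −x1²x4² − x2²x5² − x3²x6² + 2x1x2x4x5 + 2x1x3x4x6 + 2x2x3x5x6. -/
import Mathlib


noncomputable section

def Delta (x1 x2 x3 x4 x5 x6 : ℝ) : ℝ :=
  x1*x4*(-x1+x2+x3-x4+x5+x6) + x2*x5*(x1-x2+x3+x4-x5+x6) +
  x3*x6*(x1+x2-x3+x4+x5-x6) - x2*x3*x4 - x1*x3*x5 - x1*x2*x6 - x4*x5*x6

def rho (x1 x2 x3 x4 x5 x6 : ℝ) : ℝ :=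
  -x1^2*x4^2 - x2^2*x5^2 - x3^2*x6^2 +
  2*x1*x2*x4*x5 + 2*x1*x3*x4*x6 + 2*x2*x3*x5*x6

lemma lt_of_sq_lt_sq' (a b : ℝ) (h : a^2 < b^2) (hb : 0 ≤ b) : a < b := by
  nlinarith

lemma sq_lt_of_abs_lt' (a b : ℝ) (h1 : a < b) (h2 : -a < b) : a^2 < b^2 := by
  nlinarith

lemma bound_of_sq_le' (u A : ℝ) (hu : 0 < u) (hA : A^2 ≤ 4*u^2) :
    -(2*u) ≤ A ∧ A ≤ 2*u := by
  constructor
  · nlinarith [sq_nonneg (A + 2*u)]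
  · nlinarith [sq_nonneg (A - 2*u)]

lemma prod_bound' (u v A B : ℝ) (hA1 : -(2*u) ≤ A) (hA2 : A ≤ 2*u)
    (hB1 : -(2*v) ≤ B) (hB2 : B ≤ 2*v) :
    -(4*(u*v)) ≤ A*B ∧ A*B ≤ 4*(u*v) := by
  have p1 : 0 ≤ (2*u - A)*(2*v + B) := mul_nonneg (by linarith) (by linarith)
  have p2 : 0 ≤ (2*u + A)*(2*v - B) := mul_nonneg (by linarith) (by linarith)
  have p3 : 0 ≤ (2*u - A)*(2*v - B) := mul_nonneg (by linarith) (by linarith)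
  have p4 : 0 ≤ (2*u + A)*(2*v + B) := mul_nonneg (by linarith) (by linarith)
  constructor
  · nlinarith [p3, p4]
  · nlinarith [p1, p2]

lemma c_aux1' (u v A B : ℝ) :
    (4*u^2 - A^2)*(4*v^2 - B^2) ≤ (4*(u*v) + A*B)^2 := by
  nlinarith [sq_nonneg (u*B + v*A)]

lemma c_aux2' (u v A B : ℝ) :
    (4*u^2 - A^2)*(4*v^2 - B^2) ≤ (4*(u*v) - A*B)^2 := by
  nlinarith [sq_nonneg (u*B - v*A)]

/-- Abstract key step: if `G² < (4u²−A²)(4v²−B²)` with `A² ≤ 4u²`, `B² ≤ 4v²`,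
`u,v > 0`, then `(G − A·B)² < 16u²v²`. -/
lemma aux_key (u v A B G : ℝ) (hu : 0 < u) (hv : 0 < v)
    (hA : A^2 ≤ 4*u^2) (hB : B^2 ≤ 4*v^2)
    (hG : G^2 < (4*u^2 - A^2)*(4*v^2 - B^2)) :
    (G - A*B)^2 < 16*u^2*v^2 := by
  obtain ⟨hA1, hA2⟩ := bound_of_sq_le' u A hu hA
  obtain ⟨hB1, hB2⟩ := bound_of_sq_le' v B hv hB
  obtain ⟨hlb, hub⟩ := prod_bound' u v A B hA1 hA2 hB1 hB2
  have hpos1 : 0 ≤ 4*(u*v) + A*B := by linarith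
  have hpos2 : 0 ≤ 4*(u*v) - A*B := by linarith
  have g1 : G < 4*(u*v) + A*B :=
    lt_of_sq_lt_sq' G _ (lt_of_lt_of_le hG (c_aux1' u v A B)) hpos1
  have g2 : -G < 4*(u*v) - A*B :=
    lt_of_sq_lt_sq' (-G) _ (by simpa using lt_of_lt_of_le hG (c_aux2' u v A B)) hpos2
  have h := sq_lt_of_abs_lt' (G - A*B) (4*(u*v)) (by linarith) (by linarith)
  calc (G - A*B)^2 < (4*(u*v))^2 := h
    _ = 16*u^2*v^2 := by ring

set_option maxHeartbeats 1000000 in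
/-- If Δ(x1,...,x6) > 0 for x1,...,x6 ∈ [4,16], then ρ(x1,...,x6) > 0. -/
theorem rho_pos_of_Delta_pos
    (x1 x2 x3 x4 x5 x6 : ℝ)
    (h1 : x1 ∈ Set.Icc (4:ℝ) 16) (h2 : x2 ∈ Set.Icc (4:ℝ) 16)
    (h3 : x3 ∈ Set.Icc (4:ℝ) 16) (h4 : x4 ∈ Set.Icc (4:ℝ) 16)
    (h5 : x5 ∈ Set.Icc (4:ℝ) 16) (h6 : x6 ∈ Set.Icc (4:ℝ) 16)
    (hΔ : 0 < Delta x1 x2 x3 x4 x5 x6) :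
    0 < rho x1 x2 x3 x4 x5 x6 := by
  obtain ⟨h1l, h1u⟩ := h1
  obtain ⟨h2l, h2u⟩ := h2
  obtain ⟨h3l, h3u⟩ := h3
  obtain ⟨h4l, h4u⟩ := h4
  obtain ⟨h5l, h5u⟩ := h5
  obtain ⟨h6l, h6u⟩ := h6
  set A : ℝ := x2 + x3 - x4 with hA
  set Bb : ℝ := x5 + x6 - x4 with hBb
  set G : ℝ := 2*x1*x4 - (x4*(x2+x3-x4+x5+x6) + x2*x5 + x3*x6 - x3*x5 - x2*x6) with hG
  -- triangle-type nonnegativity on the box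
  have hT1 : A^2 ≤ 4*(x2*x3) := by
    simp only [hA]
    nlinarith [mul_nonneg (sub_nonneg.2 h2l) (sub_nonneg.2 h3l),
      mul_nonneg (sub_nonneg.2 h2u) (sub_nonneg.2 h3u),
      mul_nonneg (sub_nonneg.2 h2u) (sub_nonneg.2 h3l),
      mul_nonneg (sub_nonneg.2 h2l) (sub_nonneg.2 h3u),
      mul_nonneg (sub_nonneg.2 h4l) (sub_nonneg.2 h4u)]
  have hT2 : Bb^2 ≤ 4*(x5*x6) := by
    simp only [hBb]
    nlinarith [mul_nonneg (sub_nonneg.2 h5l) (sub_nonneg.2 h6l),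
      mul_nonneg (sub_nonneg.2 h5u) (sub_nonneg.2 h6u),
      mul_nonneg (sub_nonneg.2 h5u) (sub_nonneg.2 h6l),
      mul_nonneg (sub_nonneg.2 h5l) (sub_nonneg.2 h6u),
      mul_nonneg (sub_nonneg.2 h4l) (sub_nonneg.2 h4u)]
  have hx23 : (0:ℝ) < x2*x3 := by nlinarith
  have hx56 : (0:ℝ) < x5*x6 := by nlinarith
  set u : ℝ := Real.sqrt (x2*x3) with hu
  set v : ℝ := Real.sqrt (x5*x6) with hv
  have hu0 : 0 < u := Real.sqrt_pos.2 hx23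
  have hv0 : 0 < v := Real.sqrt_pos.2 hx56
  have hu2 : u^2 = x2*x3 := Real.sq_sqrt hx23.le
  have hv2 : v^2 = x5*x6 := Real.sq_sqrt hx56.le
  -- key discriminant identity
  have hId : 4*(x4*Delta x1 x2 x3 x4 x5 x6) = (4*(x2*x3) - A^2)*(4*(x5*x6) - Bb^2) - G^2 := by
    simp only [hA, hBb, hG, Delta]; ring
  have hx4 : (0:ℝ) < x4 := by linarith
  have hG2 : G^2 < (4*u^2 - A^2)*(4*v^2 - Bb^2) := by
    have h4Δ : 0 < x4*Delta x1 x2 x3 x4 x5 x6 := mul_pos hx4 hΔ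
    have : G^2 < (4*(x2*x3) - A^2)*(4*(x5*x6) - Bb^2) := by linarith
    rw [hu2, hv2]; exact this
  have hkey := aux_key u v A Bb G hu0 hv0 (by rw [hu2]; linarith) (by rw [hv2]; linarith) hG2
  -- final identity: 4ρ = 16 x2x3x5x6 − (G − A·Bb)²
  have hId2 : 4*(rho x1 x2 x3 x4 x5 x6) = 16*((x2*x3)*(x5*x6)) - (G - A*Bb)^2 := by
    simp only [hA, hBb, hG, rho]; ring
  have h16 : 16*u^2*v^2 = 16*((x2*x3)*(x5*x6)) := by rw [hu2, hv2]; ring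
  rw [h16] at hkey
  linarith
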